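/- arXiv:1412.3442 — 6 statements merged into one kernel-verified Lean document; each statement's English description precedes it below -/
import Mathlib

section
/- Let P be a sub-uniform random variable, i.e., P takes values in [0,1] and E[h(P)] ≤ E[h(U)] for every convex h, where U is uniform on [0,1]. Then for every α ∈ [0, 1/2], P(P ≤ α) ≤ 2α. -/
/-!
Test sub-uniformity against the convex hinge `h x = max (c - x) 0` with `2α ≤ c ≤ 1`. Since
`h ≥ c - α` on `{P ≤ α}`, Markov's inequality and `∫₀¹ h = c² / 2` give
`(c - α) · P(P ≤ α) ≤ c² / 2 ≤ (c - α) · c`, so `P(P ≤ α) ≤ c`; now let `c` decrease to `2α`.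
-/

open MeasureTheory Set

lemma convexOn_max_sub_zero (c : ℝ) : ConvexOn ℝ univ fun x : ℝ => max (c - x) 0 :=
  ((convexOn_const c convex_univ).sub (concaveOn_id convex_univ)).sup
    (convexOn_const 0 convex_univ)

lemma setIntegral_Icc_max_sub_zero {c : ℝ} (hc0 : 0 ≤ c) (hc1 : c ≤ 1) :
    ∫ u in Icc (0 : ℝ) 1, max (c - u) 0 = c ^ 2 / 2 := by
  have hcont : Continuous fun u : ℝ => max (c - u) 0 := by fun_prop
  have hleft : ∫ u in (0 : ℝ)..c, max (c - u) 0 = ∫ u in (0 : ℝ)..c, (c - u) :=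
    intervalIntegral.integral_congr fun u hu => by
      rw [uIcc_of_le hc0] at hu
      exact max_eq_left (by linarith [hu.2])
  have hright : ∫ u in c..1, max (c - u) 0 = ∫ _ in c..1, (0 : ℝ) :=
    intervalIntegral.integral_congr fun u hu => by
      rw [uIcc_of_le hc1] at hu
      exact max_eq_right (by linarith [hu.1])
  rw [integral_Icc_eq_integral_Ioc, ← intervalIntegral.integral_of_le zero_le_one,
    ← intervalIntegral.integral_add_adjacent_intervals (hcont.intervalIntegrable 0 c)
      (hcont.intervalIntegrable c 1), hleft, hright,
    intervalIntegral.integral_comp_sub_left (fun u => u) c]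
  simp only [sub_self, sub_zero, integral_id, intervalIntegral.integral_zero]
  ring

lemma mul_measureReal_le_integral_max_sub {Ω : Type*} [MeasurableSpace Ω] {μ : Measure Ω}
    [IsFiniteMeasure μ] {P : Ω → ℝ} {c t : ℝ} (htc : t ≤ c)
    (hint : Integrable (fun ω => max (c - P ω) 0) μ) :
    (c - t) * μ.real {ω | P ω ≤ t} ≤ ∫ ω, max (c - P ω) 0 ∂μ := by
  have hsub : {ω | P ω ≤ t} ⊆ {ω | c - t ≤ max (c - P ω) 0} := fun ω (hω : P ω ≤ t) =>
    show c - t ≤ max (c - P ω) 0 from le_max_of_le_left (by linarith)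
  calc (c - t) * μ.real {ω | P ω ≤ t}
      ≤ (c - t) * μ.real {ω | c - t ≤ max (c - P ω) 0} :=
        mul_le_mul_of_nonneg_left (measureReal_mono hsub) (sub_nonneg.2 htc)
    _ ≤ ∫ ω, max (c - P ω) 0 ∂μ :=
        mul_meas_ge_le_integral_of_nonneg
          (Filter.Eventually.of_forall fun _ => le_max_right _ _) hint (c - t)

lemma measureReal_le_of_subuniform {Ω : Type*} [MeasurableSpace Ω] {μ : Measure Ω}
    [IsProbabilityMeasure μ] {P : Ω → ℝ} (hPmeas : Measurable P) (hP0 : ∀ ω, 0 ≤ P ω)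
    (hcx : ∀ h : ℝ → ℝ, ConvexOn ℝ Set.univ h →
      Integrable (fun ω : Ω => h (P ω)) μ → IntegrableOn h (Icc (0 : ℝ) 1) volume →
      ∫ ω, h (P ω) ∂μ ≤ ∫ u in Icc (0 : ℝ) 1, h u)
    {α c : ℝ} (hαc : 2 * α ≤ c) (hc0 : 0 < c) (hc1 : c ≤ 1) :
    μ.real {ω | P ω ≤ α} ≤ c := by
  have hint : Integrable (fun ω => max (c - P ω) 0) μ :=
    Integrable.of_bound (by fun_prop) c (ae_of_all _ fun ω => by
      rw [Real.norm_of_nonneg (le_max_right _ _)]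
      exact max_le (by linarith [hP0 ω]) hc0.le)
  have hcont : Continuous fun u : ℝ => max (c - u) 0 := by fun_prop
  have key : (c - α) * μ.real {ω | P ω ≤ α} ≤ (c - α) * c :=
    calc (c - α) * μ.real {ω | P ω ≤ α}
        ≤ ∫ ω, max (c - P ω) 0 ∂μ := mul_measureReal_le_integral_max_sub (by linarith) hint
      _ ≤ ∫ u in Icc (0 : ℝ) 1, max (c - u) 0 :=
          hcx _ (convexOn_max_sub_zero c) hint hcont.integrableOn_Icc
      _ = c ^ 2 / 2 := setIntegral_Icc_max_sub_zero hc0.le hc1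
      _ ≤ (c - α) * c := by nlinarith
  exact le_of_mul_le_mul_left key (by linarith)

/-- If `P` is sub-uniform (takes values in `[0,1]` and is dominated
in the convex order by a uniform variable on `[0,1]`), then
`P(P ≤ α) ≤ 2α` for every `α ∈ [0, 1/2]`. -/
theorem subuniform_two_alpha_bound
    {Ω : Type*} [MeasurableSpace Ω] (μ : Measure Ω) [IsProbabilityMeasure μ]
    (P : Ω → ℝ) (hPmeas : Measurable P) (hPmem : ∀ ω, P ω ∈ Icc (0 : ℝ) 1)
    (hcx : ∀ h : ℝ → ℝ, ConvexOn ℝ Set.univ h →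
      Integrable (fun ω : Ω => h (P ω)) μ → IntegrableOn h (Icc (0 : ℝ) 1) volume →
      ∫ ω, h (P ω) ∂μ ≤ ∫ u in Icc (0 : ℝ) 1, h u)
    (α : ℝ) (hα : α ∈ Icc (0 : ℝ) (1 / 2)) :
    μ {ω | P ω ≤ α} ≤ ENNReal.ofReal (2 * α) := by
  rw [ENNReal.le_ofReal_iff_toReal_le (measure_ne_top _ _) (by linarith [hα.1])]
  refine le_of_forall_gt_imp_ge_of_dense fun c hc => ?_
  rcases le_or_gt c 1 with hc1 | hc1
  · exact measureReal_le_of_subuniform hPmeas (fun ω => (hPmem ω).1) hcx hc.le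
      (by linarith [hα.1]) hc1
  · exact measureReal_le_one.trans hc1.le
end

section
/- For each α ∈ (0, 1/2), the probability measure P_{2α} on [0,1] which is a mixture of a point mass at α with weight 2α and the uniform distribution on [2α, 1] with weight 1−2α is sub-uniform (i.e., P_{2α} ≤_cx Uniform[0,1]), and a random variable P with law P_{2α} satisfies P(P ≤ α) = 2α. -/
open MeasureTheory Set

/-- For `α ∈ (0, 1/2)`, the mixture `P_{2α}` of a point mass at `α`
(weight `2α`) and the uniform distribution on `[2α,1]` (weight `1−2α`, so that
this part is Lebesgue measure restricted to `[2α,1]`) is sub-uniform, and a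
random variable with law `P_{2α}` satisfies `P(P ≤ α) = 2α`. -/
theorem mixture_subuniform_achieves_two_alpha
    (α : ℝ) (hα : α ∈ Ioo (0 : ℝ) (1 / 2))
    (P2α : Measure ℝ)
    (hdef : P2α = ENNReal.ofReal (2 * α) • Measure.dirac α
        + ENNReal.ofReal (1 - 2 * α)
            • ((ENNReal.ofReal (1 - 2 * α))⁻¹ • volume.restrict (Icc (2 * α) 1))) :
    (∀ h : ℝ → ℝ, ConvexOn ℝ Set.univ h →
        Integrable h P2α → IntegrableOn h (Icc (0 : ℝ) 1) volume →
        ∫ x, h x ∂P2α ≤ ∫ u in Icc (0 : ℝ) 1, h u)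
      ∧ P2α (Iic α) = ENNReal.ofReal (2 * α) := by
  obtain ⟨hα0, hα2⟩ := hα
  have h2α1 : 2 * α < 1 := by linarith
  have h2α0 : 0 < 2 * α := by linarith
  have hsub : 0 < 1 - 2 * α := by linarith
  have hsimp : P2α = ENNReal.ofReal (2 * α) • Measure.dirac α
      + volume.restrict (Icc (2 * α) 1) := by
    rw [hdef, smul_smul, ENNReal.mul_inv_cancel (by positivity) ENNReal.ofReal_ne_top, one_smul]
  constructor
  · intro h hconv hint hint01
    rw [hsimp] at hint ⊢
    rw [integrable_add_measure] at hint
    rw [integral_add_measure hint.1 hint.2, integral_smul_measure, integral_dirac,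
      ENNReal.toReal_ofReal h2α0.le]
    -- interval integrability pieces
    have hii01 : IntervalIntegrable h volume 0 1 := by
      have huI : uIcc (0 : ℝ) 1 = Icc 0 1 := uIcc_of_le zero_le_one
      exact (huI ▸ hint01 : IntegrableOn h (uIcc (0:ℝ) 1) volume).intervalIntegrable
    have hii0 : IntervalIntegrable h volume 0 (2 * α) := by
      apply hii01.mono_set
      rw [uIcc_of_le h2α0.le, uIcc_of_le zero_le_one]
      exact Icc_subset_Icc le_rfl h2α1.le
    have hii1 : IntervalIntegrable h volume (2 * α) 1 := by
      apply hii01.mono_set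
      rw [uIcc_of_le h2α1.le, uIcc_of_le zero_le_one]
      exact Icc_subset_Icc h2α0.le le_rfl
    have e1 : ∫ u in Icc (0 : ℝ) 1, h u = ∫ u in (0 : ℝ)..1, h u := by
      rw [intervalIntegral.integral_of_le (by norm_num), integral_Icc_eq_integral_Ioc]
    have e2 : ∫ u in Icc (2 * α) 1, h u = ∫ u in (2 * α)..1, h u := by
      rw [intervalIntegral.integral_of_le h2α1.le, integral_Icc_eq_integral_Ioc]
    rw [e1, e2, ← intervalIntegral.integral_add_adjacent_intervals hii0 hii1]
    have key : 2 * α * h α ≤ ∫ u in (0 : ℝ)..(2 * α), h u := by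
      have hrefl : ∫ u in (0 : ℝ)..(2 * α), h (2 * α - u)
          = ∫ u in (0 : ℝ)..(2 * α), h u := by
        rw [intervalIntegral.integral_comp_sub_left h (2 * α)]
        norm_num
      have hiir : IntervalIntegrable (fun u => h (2 * α - u)) volume 0 (2 * α) := by
        have := (hii0.comp_sub_left (2 * α)).symm
        simpa using this
      have havg : ∫ u in (0 : ℝ)..(2 * α), (h u + h (2 * α - u)) / 2
          = ∫ u in (0 : ℝ)..(2 * α), h u := by
        rw [intervalIntegral.integral_div, intervalIntegral.integral_add hii0 hiir, hrefl]
        ring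
      rw [← havg]
      have hconst : 2 * α * h α = ∫ _ in (0 : ℝ)..(2 * α), h α := by
        rw [intervalIntegral.integral_const, smul_eq_mul]
        ring
      rw [hconst]
      apply intervalIntegral.integral_mono_on h2α0.le (intervalIntegrable_const)
        (by exact (hii0.add hiir).div_const 2)
      intro x hx
      have := hconv.2 (mem_univ x) (mem_univ (2 * α - x))
        (le_of_lt one_half_pos) (le_of_lt one_half_pos) (by norm_num)
      have harg : (1/2 : ℝ) • x + (1/2 : ℝ) • (2 * α - x) = α := by
        simp only [smul_eq_mul]; ring
      rw [harg] at this
      calc h α ≤ (1/2 : ℝ) * h x + (1/2 : ℝ) * h (2 * α - x) := by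
            simpa [smul_eq_mul] using this
        _ = (h x + h (2 * α - x)) / 2 := by ring
    simp only [smul_eq_mul]
    linarith
  · rw [hsimp]
    simp only [Measure.add_apply, Measure.smul_apply, smul_eq_mul,
      Measure.dirac_apply' _ measurableSet_Iic, Measure.restrict_apply measurableSet_Iic]
    have h1 : α ∈ Iic α := self_mem_Iic
    have h2 : Iic α ∩ Icc (2 * α) 1 = ∅ := by
      ext x
      simp only [mem_inter_iff, mem_Iic, mem_Icc, mem_empty_iff_false, iff_false]
      rintro ⟨hx1, hx2, _⟩
      linarith
    rw [h2]
    simp [indicator_of_mem h1]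
end

section
/- Let U₀ be uniform on [0,1], α ∈ (0,1/2), and define U₁ = U₀ if U₀ ≥ 2α, and U₁ = 2α − U₀ if U₀ < 2α. Then U₁ is uniformly distributed on [0,1], and (U₀ + U₁)/2 has the distribution P_{2α}: a mixture of a point mass at α with weight 2α and the uniform distribution on [2α,1] with weight 1−2α. -/
open MeasureTheory Set

/-- If `U₀` is uniform on `[0,1]` and
`U₁ = U₀` when `U₀ ≥ 2α`, `U₁ = 2α − U₀` when `U₀ < 2α`, then `U₁` is uniform on
`[0,1]` and `(U₀ + U₁)/2` has distribution `P_{2α}`, the mixture of a point mass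
at `α` (weight `2α`) and the uniform distribution on `[2α,1]` (weight `1−2α`). -/
theorem folding_construction_gives_P2alpha
    {Ω : Type*} [MeasurableSpace Ω] (μ : Measure Ω) [IsProbabilityMeasure μ]
    (α : ℝ) (hα : α ∈ Ioo (0 : ℝ) (1 / 2))
    (U₀ : Ω → ℝ) (hU₀meas : Measurable U₀)
    (hU₀unif : Measure.map U₀ μ = volume.restrict (Icc (0 : ℝ) 1))
    (U₁ : Ω → ℝ)
    (hU₁def : U₁ = fun ω => if 2 * α ≤ U₀ ω then U₀ ω else 2 * α - U₀ ω) :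
    Measure.map U₁ μ = volume.restrict (Icc (0 : ℝ) 1)
      ∧ Measure.map (fun ω => (U₀ ω + U₁ ω) / 2) μ
        = ENNReal.ofReal (2 * α) • Measure.dirac α
          + ENNReal.ofReal (1 - 2 * α)
              • ((ENNReal.ofReal (1 - 2 * α))⁻¹ • volume.restrict (Icc (2 * α) 1)) := by
  obtain ⟨hα0, hα2⟩ := hα
  have h2α : (0:ℝ) < 2 * α := by linarith
  have h2α1 : 2 * α < 1 := by linarith
  -- the folding function and the averaging function
  set f : ℝ → ℝ := fun x => if 2 * α ≤ x then x else 2 * α - x with hf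
  set g : ℝ → ℝ := fun x => if 2 * α ≤ x then x else α with hg
  have hfmeas : Measurable f := by
    apply Measurable.ite (measurableSet_le measurable_const measurable_id) measurable_id
    exact measurable_const.sub measurable_id
  have hgmeas : Measurable g := by
    apply Measurable.ite (measurableSet_le measurable_const measurable_id) measurable_id
      measurable_const
  -- decomposition of the uniform measure on [0,1]
  have hdisj : Disjoint (Ico (0:ℝ) (2*α)) (Icc (2*α) 1) := by
    apply Set.disjoint_left.mpr
    rintro x ⟨_, hx2⟩ ⟨hx3, _⟩
    exact absurd hx3 (not_le.mpr hx2)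
  have hsplit : volume.restrict (Icc (0:ℝ) 1)
      = volume.restrict (Ico 0 (2*α)) + volume.restrict (Icc (2*α) 1) := by
    rw [← Measure.restrict_union hdisj measurableSet_Icc,
      Ico_union_Icc_eq_Icc h2α.le h2α1.le]
  -- the preimage fact for the reflection
  have hpre : (fun y : ℝ => 2 * α - y) ⁻¹' (Ioc 0 (2*α)) = Ico 0 (2*α) := by
    ext x
    simp only [mem_preimage, mem_Ioc, mem_Ico]
    constructor <;> rintro ⟨h1, h2⟩ <;> constructor <;> linarith
  have hrefl : Measure.map (fun y : ℝ => 2 * α - y) (volume.restrict (Ico 0 (2*α)))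
      = volume.restrict (Ioc 0 (2*α)) := by
    have := (Measure.measurePreserving_sub_left volume (2*α)).restrict_preimage
      (s := Ioc 0 (2*α)) measurableSet_Ioc
    rw [hpre] at this
    exact this.map_eq
  -- recombination lemma
  have hrecomb : volume.restrict (Ioc (0:ℝ) (2*α)) + volume.restrict (Icc (2*α) 1)
      = volume.restrict (Icc (0:ℝ) 1) := by
    rw [Measure.restrict_congr_set (μ := volume) (Ioc_ae_eq_Icc (a := 2*α) (b := 1)).symm,
      ← Measure.restrict_union _ measurableSet_Ioc,
      Ioc_union_Ioc_eq_Ioc h2α.le h2α1.le,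
      Measure.restrict_congr_set (μ := volume) (Ioc_ae_eq_Icc (a := (0:ℝ)) (b := 1))]
    · apply Set.disjoint_left.mpr
      rintro x ⟨_, hx2⟩ ⟨hx3, _⟩
      exact absurd hx3 (not_lt.mpr hx2)
  -- f equals the reflection on Ico 0 2α and the identity on Icc 2α 1
  have hf_lo : Measure.map f (volume.restrict (Ico 0 (2*α)))
      = volume.restrict (Ioc 0 (2*α)) := by
    rw [← hrefl]
    apply Measure.map_congr
    filter_upwards [ae_restrict_mem measurableSet_Ico] with x hx
    simp only [hf, if_neg (not_le.mpr hx.2)]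
  have hf_hi : Measure.map f (volume.restrict (Icc (2*α) 1))
      = volume.restrict (Icc (2*α) 1) := by
    have : Measure.map f (volume.restrict (Icc (2*α) 1))
        = Measure.map id (volume.restrict (Icc (2*α) 1)) := by
      apply Measure.map_congr
      filter_upwards [ae_restrict_mem measurableSet_Icc] with x hx
      simp only [hf, if_pos hx.1, id]
    rw [this, Measure.map_id]
  -- g equals the constant α on Ico 0 2α and the identity on Icc 2α 1
  have hg_lo : Measure.map g (volume.restrict (Ico 0 (2*α)))
      = ENNReal.ofReal (2 * α) • Measure.dirac α := by
    have : Measure.map g (volume.restrict (Ico 0 (2*α)))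
        = Measure.map (fun _ => α) (volume.restrict (Ico 0 (2*α))) := by
      apply Measure.map_congr
      filter_upwards [ae_restrict_mem measurableSet_Ico] with x hx
      simp only [hg, if_neg (not_le.mpr hx.2)]
    rw [this, Measure.map_const, Measure.restrict_apply_univ, Real.volume_Ico, sub_zero]
  have hg_hi : Measure.map g (volume.restrict (Icc (2*α) 1))
      = volume.restrict (Icc (2*α) 1) := by
    have : Measure.map g (volume.restrict (Icc (2*α) 1))
        = Measure.map id (volume.restrict (Icc (2*α) 1)) := by
      apply Measure.map_congr
      filter_upwards [ae_restrict_mem measurableSet_Icc] with x hx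
      simp only [hg, if_pos hx.1, id]
    rw [this, Measure.map_id]
  -- composition facts
  have hU₁comp : U₁ = f ∘ U₀ := by
    rw [hU₁def]; rfl
  have hgcomp : (fun ω => (U₀ ω + U₁ ω) / 2) = g ∘ U₀ := by
    funext ω
    rw [hU₁def]
    simp only [Function.comp, hg, hf]
    by_cases h : 2 * α ≤ U₀ ω <;> simp [h] <;> ring
  constructor
  · rw [hU₁comp, ← Measure.map_map hfmeas hU₀meas, hU₀unif, hsplit, Measure.map_add _ _ hfmeas,
      hf_lo, hf_hi, hrecomb]
    exact hsplit
  · have hsimp : ENNReal.ofReal (1 - 2 * α)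
        • ((ENNReal.ofReal (1 - 2 * α))⁻¹ • volume.restrict (Icc (2 * α) 1))
        = volume.restrict (Icc (2 * α) 1) := by
      rw [smul_smul, ENNReal.mul_inv_cancel, one_smul]
      · exact (ENNReal.ofReal_pos.mpr (by linarith)).ne'
      · exact ENNReal.ofReal_ne_top
    rw [hsimp, hgcomp, ← Measure.map_map hgmeas hU₀meas, hU₀unif, hsplit,
      Measure.map_add _ _ hgmeas, hg_lo, hg_hi]
end

section
/- Let X and Y be integrable real random variables. Then X ≤_cx Y if and only if E[(x − X)₊] ≤ E[(x − Y)₊] for all x ∈ ℝ and E(X) = E(Y). -/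
/-!
Subtracting its supporting line at `0`, a convex `h` becomes a mixture of hinge functions,
`t ↦ (t - s)₊` for `s > 0` and `t ↦ (s - t)₊` for `s ≤ 0`, against the Stieltjes measure `γ` of
its right derivative: `h t = h 0 + h'₊(0) t + ∫ hinge s t dγ(s)`. Since
`E (X - s)₊ = E (s - X)₊ + E X - s`, the two conditions give `E hinge s X ≤ E hinge s Y` for
every `s`, and Tonelli's theorem integrates this against `γ`. The converse only tests the convex
functions `t ↦ (x - t)₊` and `t ↦ ±t`.
-/

open MeasureTheory Set Filter

/-- For fixed `t`, only `s` between `0` and `t` contribute, so mixtures of hinges against a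
locally finite measure are finite. -/
noncomputable def hinge (s t : ℝ) : ℝ := if 0 < s then max (t - s) 0 else max (s - t) 0

lemma hinge_nonneg (s t : ℝ) : 0 ≤ hinge s t := by
  unfold hinge
  split_ifs <;> exact le_max_right _ _

lemma measurable_hinge : Measurable (Function.uncurry hinge) :=
  Measurable.ite (measurableSet_lt measurable_const measurable_fst)
    ((measurable_snd.sub measurable_fst).max measurable_const)
    ((measurable_fst.sub measurable_snd).max measurable_const)

lemma support_ofReal_hinge_subset (t : ℝ) :
    (Function.support fun s ↦ ENNReal.ofReal (hinge s t)) ⊆ uIoc 0 t := by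
  intro s hs
  have hpos : 0 < hinge s t := not_le.1 fun h ↦ hs (ENNReal.ofReal_eq_zero.2 h)
  unfold hinge at hpos
  split_ifs at hpos with hs0 <;> rw [lt_max_iff, lt_self_iff_false, or_false, sub_pos] at hpos
  exacts [mem_uIoc.2 (Or.inl ⟨hs0, hpos.le⟩), mem_uIoc.2 (Or.inr ⟨hpos, not_lt.1 hs0⟩)]

namespace StieltjesFunction

variable (F : StieltjesFunction ℝ)

lemma setLIntegral_Ioc_ofReal_sub_left {a t : ℝ} (hat : a ≤ t) :
    ∫⁻ s in Ioc a t, ENNReal.ofReal (t - s) ∂F.measure =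
      ENNReal.ofReal (∫ u in a..t, (F u - F a)) := by
  set S : Set (ℝ × ℝ) := {p | a < p.1 ∧ p.1 ≤ p.2 ∧ p.2 ≤ t}
  have hS : MeasurableSet S :=
    (measurableSet_lt measurable_const measurable_fst).inter
      ((measurableSet_le measurable_fst measurable_snd).inter
        (measurableSet_le measurable_snd measurable_const))
  calc ∫⁻ s in Ioc a t, ENNReal.ofReal (t - s) ∂F.measure
      = ∫⁻ s, volume (Prod.mk s ⁻¹' S) ∂F.measure := by
        rw [← lintegral_indicator measurableSet_Ioc]
        congr 1 with s
        by_cases hs : s ∈ Ioc a t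
        · rw [indicator_of_mem hs, ← Real.volume_Icc]
          congr 1 with u
          simp [S, hs.1]
        · rw [indicator_of_notMem hs, eq_empty_of_forall_notMem (s := Prod.mk s ⁻¹' S) ?_,
            measure_empty]
          exact fun u ⟨has, hsu, hut⟩ ↦ hs ⟨has, hsu.trans hut⟩
    _ = F.measure.prod volume S := (Measure.prod_apply hS).symm
    _ = ∫⁻ u, F.measure ((fun s ↦ (s, u)) ⁻¹' S) := Measure.prod_apply_symm hS
    _ = ∫⁻ u in Ioc a t, ENNReal.ofReal (F u - F a) := by
        rw [← lintegral_indicator measurableSet_Ioc]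
        congr 1 with u
        by_cases hu : u ∈ Ioc a t
        · rw [indicator_of_mem hu, ← measure_Ioc]
          congr 1 with s
          simp [S, hu.2]
        · rw [indicator_of_notMem hu,
            eq_empty_of_forall_notMem (s := (fun s ↦ (s, u)) ⁻¹' S) ?_, measure_empty]
          exact fun s ⟨has, hsu, hut⟩ ↦ hu ⟨has.trans_le hsu, hut⟩
    _ = ENNReal.ofReal (∫ u in a..t, (F u - F a)) := by
        rw [intervalIntegral.integral_of_le hat, ofReal_integral_eq_lintegral_ofReal
          (F.mono.intervalIntegrable.sub intervalIntegrable_const).1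
          (ae_restrict_of_forall_mem measurableSet_Ioc fun u hu ↦ sub_nonneg.2 (F.mono hu.1.le))]

lemma setLIntegral_Ioc_ofReal_sub_right {t a : ℝ} (hta : t ≤ a) :
    ∫⁻ s in Ioc t a, ENNReal.ofReal (s - t) ∂F.measure =
      ENNReal.ofReal (∫ u in t..a, (F a - F u)) := by
  set S : Set (ℝ × ℝ) := {p | t < p.2 ∧ p.2 < p.1 ∧ p.1 ≤ a}
  have hS : MeasurableSet S :=
    (measurableSet_lt measurable_const measurable_snd).inter
      ((measurableSet_lt measurable_snd measurable_fst).inter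
        (measurableSet_le measurable_fst measurable_const))
  calc ∫⁻ s in Ioc t a, ENNReal.ofReal (s - t) ∂F.measure
      = ∫⁻ s, volume (Prod.mk s ⁻¹' S) ∂F.measure := by
        rw [← lintegral_indicator measurableSet_Ioc]
        congr 1 with s
        by_cases hs : s ∈ Ioc t a
        · rw [indicator_of_mem hs, ← Real.volume_Ioo]
          congr 1 with u
          simp [S, hs.2, and_comm]
        · rw [indicator_of_notMem hs, eq_empty_of_forall_notMem (s := Prod.mk s ⁻¹' S) ?_,
            measure_empty]
          exact fun u ⟨htu, hus, hsa⟩ ↦ hs ⟨htu.trans hus, hsa⟩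
    _ = F.measure.prod volume S := (Measure.prod_apply hS).symm
    _ = ∫⁻ u, F.measure ((fun s ↦ (s, u)) ⁻¹' S) := Measure.prod_apply_symm hS
    _ = ∫⁻ u in Ioc t a, ENNReal.ofReal (F a - F u) := by
        rw [← lintegral_indicator measurableSet_Ioc]
        congr 1 with u
        by_cases hu : u ∈ Ioc t a
        · rw [indicator_of_mem hu, ← measure_Ioc]
          congr 1 with s
          simp [S, hu.1]
        · rw [indicator_of_notMem hu,
            eq_empty_of_forall_notMem (s := (fun s ↦ (s, u)) ⁻¹' S) ?_, measure_empty]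
          exact fun s ⟨htu, hus, hsa⟩ ↦ hu ⟨htu, hus.le.trans hsa⟩
    _ = ENNReal.ofReal (∫ u in t..a, (F a - F u)) := by
        rw [intervalIntegral.integral_of_le hta, ofReal_integral_eq_lintegral_ofReal
          (intervalIntegrable_const.sub F.mono.intervalIntegrable).1
          (ae_restrict_of_forall_mem measurableSet_Ioc fun u hu ↦ sub_nonneg.2 (F.mono hu.2))]

variable {G : ℝ → ℝ}

lemma mul_le_sub_of_integral_eq (hG : ∀ a b, ∫ u in a..b, F u = G b - G a) (t : ℝ) :
    F 0 * t ≤ G t - G 0 := by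
  rcases le_total 0 t with ht | ht
  · have := intervalIntegral.integral_mono_on ht (intervalIntegrable_const (μ := volume))
      F.mono.intervalIntegrable fun u hu ↦ F.mono hu.1
    rw [intervalIntegral.integral_const, smul_eq_mul, hG] at this
    linarith
  · have := intervalIntegral.integral_mono_on ht F.mono.intervalIntegrable
      (intervalIntegrable_const (μ := volume)) fun u hu ↦ F.mono hu.2
    rw [intervalIntegral.integral_const, smul_eq_mul, hG] at this
    linarith

lemma lintegral_ofReal_hinge (hG : ∀ a b, ∫ u in a..b, F u = G b - G a) (t : ℝ) :
    ∫⁻ s, ENNReal.ofReal (hinge s t) ∂F.measure = ENNReal.ofReal (G t - G 0 - F 0 * t) := by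
  rcases le_total 0 t with ht | ht
  · rw [← setLIntegral_eq_of_support_subset (s := Ioc 0 t), setLIntegral_congr_fun measurableSet_Ioc
      fun s hs ↦ by rw [hinge, if_pos hs.1, max_eq_left (sub_nonneg.2 hs.2)],
      F.setLIntegral_Ioc_ofReal_sub_left ht, intervalIntegral.integral_sub
      F.mono.intervalIntegrable intervalIntegrable_const, hG, intervalIntegral.integral_const,
      smul_eq_mul]
    · congr 1; ring
    · simpa only [uIoc_of_le ht] using support_ofReal_hinge_subset t
  · rw [← setLIntegral_eq_of_support_subset (s := Ioc t 0), setLIntegral_congr_fun measurableSet_Ioc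
      fun s hs ↦ by rw [hinge, if_neg hs.2.not_gt, max_eq_left (sub_nonneg.2 hs.1.le)],
      F.setLIntegral_Ioc_ofReal_sub_right ht, intervalIntegral.integral_sub
      intervalIntegrable_const F.mono.intervalIntegrable, hG, intervalIntegral.integral_const,
      smul_eq_mul]
    · congr 1; ring
    · simpa only [uIoc_of_ge ht] using support_ofReal_hinge_subset t

end StieltjesFunction

lemma Monotone.ae_stieltjesFunction_eq {f : ℝ → ℝ} (hf : Monotone f) :
    ∀ᵐ x, hf.stieltjesFunction x = f x := by
  filter_upwards [hf.countable_not_continuousAt.ae_notMem volume] with x hx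
  rw [Classical.not_not] at hx
  exact rightLim_eq_of_tendsto (hx.tendsto.mono_left nhdsWithin_le_nhds)

namespace ConvexOn

variable {f : ℝ → ℝ}

lemma monotone_rightDeriv (hf : ConvexOn ℝ univ f) :
    Monotone fun x ↦ derivWithin f (Ioi x) x := by
  simpa using hf.monotoneOn_rightDeriv

lemma integral_rightDeriv (hf : ConvexOn ℝ univ f) (a b : ℝ) :
    ∫ x in a..b, derivWithin f (Ioi x) x = f b - f a := by
  refine intervalIntegral.integral_eq_sub_of_hasDeriv_right ?_ (fun x _ ↦ ?_)
    hf.monotone_rightDeriv.intervalIntegrable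
  · exact (hf.continuousOn isOpen_univ).mono (subset_univ _)
  · exact hf.hasDerivWithinAt_rightDeriv_of_mem_interior (by simp)

lemma exists_stieltjesFunction_integral_eq (hf : ConvexOn ℝ univ f) :
    ∃ F : StieltjesFunction ℝ, ∀ a b, ∫ x in a..b, F x = f b - f a := by
  refine ⟨hf.monotone_rightDeriv.stieltjesFunction, fun a b ↦ ?_⟩
  rw [← hf.integral_rightDeriv a b]
  exact intervalIntegral.integral_congr_ae
    (hf.monotone_rightDeriv.ae_stieltjesFunction_eq.mono fun x hx _ ↦ hx)

end ConvexOn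

theorem integral_comp_le_of_lintegral_eq_ofReal {Ω α : Type*} [MeasurableSpace Ω]
    [MeasurableSpace α] {μ : Measure Ω} [SFinite μ] {γ : Measure α} [SFinite γ]
    {k : α → ℝ → ℝ} (hk : Measurable (Function.uncurry k)) {g : ℝ → ℝ} (hg0 : ∀ t, 0 ≤ g t)
    (hg : ∀ t, ∫⁻ s, ENNReal.ofReal (k s t) ∂γ = ENNReal.ofReal (g t)) {X Y : Ω → ℝ}
    (hX : AEMeasurable X μ) (hY : AEMeasurable Y μ) (hgX : Integrable (fun ω ↦ g (X ω)) μ)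
    (hgY : Integrable (fun ω ↦ g (Y ω)) μ)
    (hkXY : ∀ s, ∫⁻ ω, ENNReal.ofReal (k s (X ω)) ∂μ ≤ ∫⁻ ω, ENNReal.ofReal (k s (Y ω)) ∂μ) :
    ∫ ω, g (X ω) ∂μ ≤ ∫ ω, g (Y ω) ∂μ := by
  have hswap : ∀ Z : Ω → ℝ, AEMeasurable Z μ → ∫⁻ ω, ENNReal.ofReal (g (Z ω)) ∂μ =
      ∫⁻ s, ∫⁻ ω, ENNReal.ofReal (k s (Z ω)) ∂μ ∂γ := fun Z hZ ↦ by
    simp_rw [← hg]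
    exact lintegral_lintegral_swap ((ENNReal.measurable_ofReal.comp hk).comp_aemeasurable
      (measurable_snd.aemeasurable.prodMk hZ.comp_fst))
  rw [← ENNReal.ofReal_le_ofReal_iff (integral_nonneg fun ω ↦ hg0 _),
    ofReal_integral_eq_lintegral_ofReal hgX (Eventually.of_forall fun ω ↦ hg0 _),
    ofReal_integral_eq_lintegral_ofReal hgY (Eventually.of_forall fun ω ↦ hg0 _),
    hswap X hX, hswap Y hY]
  exact lintegral_mono hkXY

section

variable {Ω : Type*} [MeasurableSpace Ω] {μ : Measure Ω} [IsProbabilityMeasure μ]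

lemma integral_max_sub_zero_sub_integral_max_sub_zero {Z : Ω → ℝ} (hZ : Integrable Z μ)
    (s : ℝ) : ∫ ω, max (Z ω - s) 0 ∂μ - ∫ ω, max (s - Z ω) 0 ∂μ = ∫ ω, Z ω ∂μ - s := by
  have hpos : Integrable (fun ω ↦ max (Z ω - s) 0) μ := (hZ.sub (integrable_const s)).pos_part
  have hneg : Integrable (fun ω ↦ max (s - Z ω) 0) μ := ((integrable_const s).sub hZ).pos_part
  rw [← integral_sub hpos hneg]
  simp_rw [← neg_sub (Z _) s, max_zero_sub_max_neg_zero_eq_self]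
  rw [integral_sub hZ (integrable_const s), integral_const, probReal_univ, one_smul]

lemma lintegral_ofReal_hinge_le {X Y : Ω → ℝ} (hX : Integrable X μ) (hY : Integrable Y μ)
    (hcdf : ∀ x, ∫ ω, max (x - X ω) 0 ∂μ ≤ ∫ ω, max (x - Y ω) 0 ∂μ)
    (hmean : ∫ ω, X ω ∂μ = ∫ ω, Y ω ∂μ) (s : ℝ) :
    ∫⁻ ω, ENNReal.ofReal (hinge s (X ω)) ∂μ ≤ ∫⁻ ω, ENNReal.ofReal (hinge s (Y ω)) ∂μ := by
  have hint : ∀ Z : Ω → ℝ, Integrable Z μ → Integrable (fun ω ↦ hinge s (Z ω)) μ := by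
    intro Z hZ
    unfold hinge
    split_ifs
    exacts [(hZ.sub (integrable_const s)).pos_part, ((integrable_const s).sub hZ).pos_part]
  rw [← ofReal_integral_eq_lintegral_ofReal (hint X hX)
      (Eventually.of_forall fun ω ↦ hinge_nonneg _ _),
    ← ofReal_integral_eq_lintegral_ofReal (hint Y hY)
      (Eventually.of_forall fun ω ↦ hinge_nonneg _ _)]
  refine ENNReal.ofReal_le_ofReal ?_
  rcases lt_or_ge 0 s with hs | hs
  · simp only [hinge, if_pos hs]
    linarith [hcdf s, integral_max_sub_zero_sub_integral_max_sub_zero hX s,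
      integral_max_sub_zero_sub_integral_max_sub_zero hY s]
  · simpa only [hinge, if_neg hs.not_gt] using hcdf s

lemma integral_comp_eq_integral_sub_affine {h : ℝ → ℝ} (c : ℝ) {Z : Ω → ℝ}
    (hZ : Integrable Z μ) (hhZ : Integrable (fun ω ↦ h (Z ω)) μ) :
    ∫ ω, h (Z ω) ∂μ = ∫ ω, (h (Z ω) - h 0 - c * Z ω) ∂μ + h 0 + c * ∫ ω, Z ω ∂μ := by
  have hsub : Integrable (fun ω ↦ h (Z ω) - h 0) μ := hhZ.sub (integrable_const _)
  rw [integral_sub hsub (hZ.const_mul c), integral_sub hhZ (integrable_const _), integral_const,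
    integral_const_mul, probReal_univ, one_smul]
  ring

end

theorem convex_order_iff_integrated_cdf_general
    {Ω : Type*} [MeasurableSpace Ω] (μ : Measure Ω) [IsProbabilityMeasure μ]
    (X Y : Ω → ℝ)
    (hX : Integrable X μ) (hY : Integrable Y μ) :
    (∀ h : ℝ → ℝ, ConvexOn ℝ Set.univ h →
        Integrable (fun ω : Ω => h (X ω)) μ → Integrable (fun ω : Ω => h (Y ω)) μ →
        ∫ ω, h (X ω) ∂μ ≤ ∫ ω, h (Y ω) ∂μ)
      ↔ ((∀ x : ℝ, ∫ ω, max (x - X ω) 0 ∂μ ≤ ∫ ω, max (x - Y ω) 0 ∂μ)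
          ∧ ∫ ω, X ω ∂μ = ∫ ω, Y ω ∂μ) := by
  constructor
  · intro H
    refine ⟨fun x ↦ H _ (((convexOn_const x convex_univ).sub (concaveOn_id convex_univ)).sup
        (convexOn_const 0 convex_univ)) ((integrable_const x).sub hX).pos_part
        ((integrable_const x).sub hY).pos_part,
      le_antisymm (H id (convexOn_id convex_univ) hX hY) ?_⟩
    simpa [integral_neg] using H (fun t ↦ -t) (concaveOn_id convex_univ).neg hX.neg hY.neg
  · rintro ⟨hcdf, hmean⟩ h hc hhX hhY
    obtain ⟨F, hF⟩ := hc.exists_stieltjesFunction_integral_eq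
    have hgint : ∀ Z : Ω → ℝ, Integrable Z μ → Integrable (fun ω ↦ h (Z ω)) μ →
        Integrable (fun ω ↦ h (Z ω) - h 0 - F 0 * Z ω) μ := fun Z hZ hhZ ↦
      (hhZ.sub (integrable_const _)).sub (hZ.const_mul _)
    have hmix := integral_comp_le_of_lintegral_eq_ofReal measurable_hinge
      (fun t ↦ sub_nonneg.2 (F.mul_le_sub_of_integral_eq hF t)) (F.lintegral_ofReal_hinge hF)
      hX.aemeasurable hY.aemeasurable (hgint X hX hhX) (hgint Y hY hhY)
      (lintegral_ofReal_hinge_le hX hY hcdf hmean)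
    rw [integral_comp_eq_integral_sub_affine (F 0) hX hhX,
      integral_comp_eq_integral_sub_affine (F 0) hY hhY, hmean]
    linarith

/-- For integrable real random variables `X` and `Y`,
`X ≤_cx Y` if and only if `E[(x − X)₊] ≤ E[(x − Y)₊]` for all `x` and
`E(X) = E(Y)`. -/
theorem convex_order_iff_integrated_cdf
    {Ω : Type*} [MeasurableSpace Ω] (μ : Measure Ω) [IsProbabilityMeasure μ]
    (X Y : Ω → ℝ) (hXmeas : Measurable X) (hYmeas : Measurable Y)
    (hX : Integrable X μ) (hY : Integrable Y μ) :
    (∀ h : ℝ → ℝ, ConvexOn ℝ Set.univ h →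
        Integrable (fun ω : Ω => h (X ω)) μ → Integrable (fun ω : Ω => h (Y ω)) μ →
        ∫ ω, h (X ω) ∂μ ≤ ∫ ω, h (Y ω) ∂μ)
      ↔ ((∀ x : ℝ, ∫ ω, max (x - X ω) 0 ∂μ ≤ ∫ ω, max (x - Y ω) 0 ∂μ)
          ∧ ∫ ω, X ω ∂μ = ∫ ω, Y ω ∂μ) :=
  convex_order_iff_integrated_cdf_general μ X Y hX hY
end

section
/- If X is a random variable stochastically dominated by Y in the usual stochastic order on some probability space, and Q ≥_st U where U is uniform on [0,1], then P = E(Q | D) satisfies P ≤_dcx U: for every decreasing convex function h, E[h(P)] ≤ E[h(U)]. -/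
/-!
Conditional Jensen gives `E h(P) ≤ E h(Q)`. For `E h(Q) ≤ ∫₀¹ h`, subtract `h 1` and use the
layer-cake formula on both sides: the superlevel sets of an antitone function are lower sets
of `ℝ`, and `μ(Q ≤ t) ≤ t` forces `μ(Q ∈ S) ≤ λ(S ∩ [0,1])` for every lower set `S`, by
comparing `S` with `Iic (sSup S)` and `Ico 0 (sSup S)`.
-/

open MeasureTheory Set

section

variable {Ω : Type*} {mΩ : MeasurableSpace Ω} {μ : Measure Ω}

lemma Antitone.integrable_comp_of_ae_mem_Icc [IsFiniteMeasure μ] {h : ℝ → ℝ} (hh : Antitone h)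
    {X : Ω → ℝ} (hX : AEMeasurable X μ) {a b : ℝ} (hXab : ∀ᵐ ω ∂μ, X ω ∈ Icc a b) :
    Integrable (fun ω ↦ h (X ω)) μ :=
  .of_mem_Icc (h b) (h a) (hh.measurable.comp_aemeasurable hX) <|
    hXab.mono fun _ hx ↦ ⟨hh hx.2, hh hx.1⟩

lemma measure_preimage_le_volume_inter_Icc_of_isLowerSet [IsProbabilityMeasure μ] {Q : Ω → ℝ}
    (hQst : ∀ t : ℝ, μ {ω | Q ω ≤ t} ≤ ENNReal.ofReal t) {S : Set ℝ} (hS : IsLowerSet S) :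
    μ (Q ⁻¹' S) ≤ volume (S ∩ Icc 0 1) := by
  by_cases hS1 : (1 : ℝ) ∈ S
  · rw [inter_eq_right.2 fun x hx ↦ hS hx.2 hS1, Real.volume_Icc, sub_zero, ENNReal.ofReal_one]
    exact prob_le_one
  obtain rfl | hne := S.eq_empty_or_nonempty
  · simp
  have hle1 : ∀ x ∈ S, x ≤ 1 := fun x hx ↦ le_of_not_ge fun h ↦ hS1 (hS h hx)
  calc μ (Q ⁻¹' S) ≤ μ {ω | Q ω ≤ sSup S} := measure_mono fun ω hω ↦ le_csSup ⟨1, hle1⟩ hω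
    _ ≤ volume (Ico 0 (sSup S)) := by rw [Real.volume_Ico, sub_zero]; exact hQst _
    _ ≤ volume (S ∩ Icc 0 1) := measure_mono fun x ⟨hx0, hxs⟩ ↦ by
      obtain ⟨y, hyS, hxy⟩ := exists_lt_of_lt_csSup hne hxs
      exact ⟨hS hxy.le hyS, hx0, hxy.le.trans (hle1 y hyS)⟩

lemma lintegral_ofReal_comp_le_setLIntegral_Icc_of_antitone [IsProbabilityMeasure μ] {Q : Ω → ℝ}
    (hQ : AEMeasurable Q μ) (hQst : ∀ t : ℝ, μ {ω | Q ω ≤ t} ≤ ENNReal.ofReal t)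
    {g : ℝ → ℝ} (hg : Antitone g) (hgQ : 0 ≤ᵐ[μ] fun ω ↦ g (Q ω))
    (hg01 : ∀ u ∈ Icc (0 : ℝ) 1, 0 ≤ g u) :
    ∫⁻ ω, ENNReal.ofReal (g (Q ω)) ∂μ ≤ ∫⁻ u in Icc 0 1, ENNReal.ofReal (g u) := by
  rw [lintegral_eq_lintegral_meas_lt μ hgQ (hg.measurable.comp_aemeasurable hQ),
    lintegral_eq_lintegral_meas_lt _ (ae_restrict_of_forall_mem measurableSet_Icc hg01)
      hg.measurable.aemeasurable]
  refine lintegral_mono fun t ↦ ?_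
  rw [Measure.restrict_apply' measurableSet_Icc]
  exact measure_preimage_le_volume_inter_Icc_of_isLowerSet hQst
    fun x y hxy hy ↦ hy.trans_le (hg hxy)

lemma integral_comp_le_setIntegral_Icc_of_antitone [IsProbabilityMeasure μ] {Q : Ω → ℝ}
    (hQ : AEMeasurable Q μ) (hQ01 : ∀ᵐ ω ∂μ, Q ω ∈ Icc (0 : ℝ) 1)
    (hQst : ∀ t : ℝ, μ {ω | Q ω ≤ t} ≤ ENNReal.ofReal t) {h : ℝ → ℝ} (hh : Antitone h) :
    ∫ ω, h (Q ω) ∂μ ≤ ∫ u in Icc 0 1, h u := by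
  set g : ℝ → ℝ := fun x ↦ h x - h 1
  have hg : Antitone g := fun x y hxy ↦ sub_le_sub_right (hh hxy) _
  have hg01 : ∀ u ∈ Icc (0 : ℝ) 1, 0 ≤ g u := fun u hu ↦ sub_nonneg.2 (hh hu.2)
  have hgQ : 0 ≤ᵐ[μ] fun ω ↦ g (Q ω) := hQ01.mono fun ω hω ↦ hg01 _ hω
  have hgU : 0 ≤ᵐ[volume.restrict (Icc 0 1)] g := ae_restrict_of_forall_mem measurableSet_Icc hg01
  have hgQint := hg.integrable_comp_of_ae_mem_Icc hQ hQ01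
  have hgUint : IntegrableOn g (Icc 0 1) :=
    hg.integrable_comp_of_ae_mem_Icc aemeasurable_id (ae_restrict_mem measurableSet_Icc)
  have key : ∫ ω, g (Q ω) ∂μ ≤ ∫ u in Icc 0 1, g u := by
    rw [integral_eq_lintegral_of_nonneg_ae hgQ hgQint.1,
      integral_eq_lintegral_of_nonneg_ae hgU hgUint.1]
    exact ENNReal.toReal_mono hgUint.lintegral_lt_top.ne
      (lintegral_ofReal_comp_le_setLIntegral_Icc_of_antitone hQ hQst hg hgQ hg01)
  have hhUint : IntegrableOn h (Icc 0 1) :=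
    hh.integrable_comp_of_ae_mem_Icc aemeasurable_id (ae_restrict_mem measurableSet_Icc)
  rw [integral_sub (hh.integrable_comp_of_ae_mem_Icc hQ hQ01) (integrable_const _),
    integral_sub hhUint (integrable_const _)] at key
  simpa using key

lemma integral_comp_condExp_le {E : Type*} [NormedAddCommGroup E] [NormedSpace ℝ E]
    [CompleteSpace E] {m : MeasurableSpace Ω} (hm : m ≤ mΩ) [SigmaFinite (μ.trim hm)]
    {φ : E → ℝ} (hφ : ConvexOn ℝ univ φ) (hφc : LowerSemicontinuous φ) {f : Ω → E}
    (hf : Integrable f μ) (hφf : Integrable (fun ω ↦ φ (f ω)) μ)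
    (hφP : Integrable (fun ω ↦ φ (μ[f | m] ω)) μ) :
    ∫ ω, φ (μ[f | m] ω) ∂μ ≤ ∫ ω, φ (f ω) ∂μ :=
  calc ∫ ω, φ (μ[f | m] ω) ∂μ ≤ ∫ ω, μ[φ ∘ f | m] ω ∂μ :=
        integral_mono_ae hφP integrable_condExp (hφ.map_condExp_le_univ hm hφc hf hφf)
    _ = ∫ ω, φ (f ω) ∂μ := integral_condExp hm

end

theorem posterior_predictive_dcx_order_general
    {Ω E : Type*} [MeasurableSpace Ω] (μ : Measure Ω) [IsProbabilityMeasure μ]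
    [MeasurableSpace E]
    (Q : Ω → ℝ) (hQmeas : Measurable Q) (hQmem : ∀ ω, Q ω ∈ Icc (0 : ℝ) 1)
    (hQst : ∀ t : ℝ, μ {ω | Q ω ≤ t} ≤ ENNReal.ofReal t)
    (D : Ω → E) (hD : Measurable D)
    (P : Ω → ℝ)
    (hP : P = μ[Q | MeasurableSpace.comap D inferInstance])
    (h : ℝ → ℝ) (hconv : ConvexOn ℝ Set.univ h) (hdecr : Antitone h) :
    ∫ ω, h (P ω) ∂μ ≤ ∫ u in Icc (0 : ℝ) 1, h u := by
  subst hP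
  have hm := hD.comap_le
  have hQ01 : ∀ᵐ ω ∂μ, Q ω ∈ Icc (0 : ℝ) 1 := ae_of_all μ hQmem
  have hQint : Integrable Q μ := .of_mem_Icc 0 1 hQmeas.aemeasurable hQ01
  have hP01 := (convex_Icc (0 : ℝ) 1).condExp_mem hm hQint isClosed_Icc hQ01
  have hcont : Continuous h := continuousOn_univ.1 (hconv.continuousOn isOpen_univ)
  calc _ ≤ ∫ ω, h (Q ω) ∂μ := integral_comp_condExp_le hm hconv hcont.lowerSemicontinuous hQint
        (hdecr.integrable_comp_of_ae_mem_Icc hQmeas.aemeasurable hQ01)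
        (hdecr.integrable_comp_of_ae_mem_Icc integrable_condExp.aemeasurable hP01)
    _ ≤ _ := integral_comp_le_setIntegral_Icc_of_antitone hQmeas.aemeasurable hQ01 hQst hdecr

/-- If `Q` is `[0,1]`-valued with `Q ≥_st U` (i.e. `P(Q ≤ t) ≤ t`
for all `t`), where `U` is uniform on `[0,1]`, then `P = E(Q | D)` satisfies
`P ≤_dcx U`: for every decreasing convex `h`, `E[h(P)] ≤ E[h(U)]`. -/
theorem posterior_predictive_dcx_order
    {Ω E : Type*} [MeasurableSpace Ω] (μ : Measure Ω) [IsProbabilityMeasure μ]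
    [MeasurableSpace E]
    (Q : Ω → ℝ) (hQmeas : Measurable Q) (hQmem : ∀ ω, Q ω ∈ Icc (0 : ℝ) 1)
    (hQst : ∀ t : ℝ, μ {ω | Q ω ≤ t} ≤ ENNReal.ofReal t)
    (D : Ω → E) (hD : Measurable D)
    (P : Ω → ℝ)
    (hP : P = μ[Q | MeasurableSpace.comap D inferInstance])
    (h : ℝ → ℝ) (hconv : ConvexOn ℝ Set.univ h) (hdecr : Antitone h)
    (hintP : Integrable (fun ω : Ω => h (P ω)) μ)
    (hintU : IntegrableOn h (Icc (0 : ℝ) 1) volume) :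
    ∫ ω, h (P ω) ∂μ ≤ ∫ u in Icc (0 : ℝ) 1, h u :=
  posterior_predictive_dcx_order_general μ Q hQmeas hQmem hQst D hD P hP h hconv hdecr
end

section
/- For q ∈ [0,1), the function m ↦ 1 − (2(1−q)^{1/m} − 1)^m (defined for positive integers m with 2(1−q)^{1/m} − 1 ≥ 0) is non-increasing in m, attains its maximum value 2q at m = 1, and converges to 2q − q² as m → ∞. -/
open Filter Real Topology

/-!
Write `c = 1 - q`. For `0 < s ≤ t` put `x = c ^ s` and `p = t / s ≥ 1`, so that `c ^ t = x ^ p`.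
Since `x` is the midpoint of `2x - 1` and `1`, convexity of `y ↦ y ^ p` gives
`2 x ^ p - 1 ≤ (2x - 1) ^ p`, i.e. `s ↦ (2 c ^ s - 1) ^ (1 / s)` is antitone; at `s = 1 / m` this
is the monotonicity. For the limit, `2 c ^ (1/m) - 1 = 1 + g m` where `m * g m → 2 log c` is the
derivative of `s ↦ 2 c ^ s` at `0`, hence `(1 + g m) ^ m → exp (2 log c) = c ^ 2`.
-/

theorem two_mul_rpow_sub_one_le_rpow {p x : ℝ} (hp : 1 ≤ p) (hx : 1 / 2 ≤ x) :
    2 * x ^ p - 1 ≤ (2 * x - 1) ^ p := by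
  have h := (convexOn_rpow hp).2 (Set.mem_Ici.2 (by linarith : (0 : ℝ) ≤ 2 * x - 1))
    (Set.mem_Ici.2 zero_le_one) (by norm_num : (0 : ℝ) ≤ 1 / 2) (by norm_num : (0 : ℝ) ≤ 1 / 2)
    (by norm_num)
  have hmid : 1 / 2 * (2 * x - 1) + 1 / 2 * 1 = x := by ring
  simp only [smul_eq_mul, hmid, one_rpow] at h
  linarith

theorem two_mul_rpow_sub_one_rpow_inv_le {c s t : ℝ} (hc : 0 ≤ c) (hs : 0 < s) (hst : s ≤ t)
    (ht : 0 ≤ 2 * c ^ t - 1) : (2 * c ^ t - 1) ^ t⁻¹ ≤ (2 * c ^ s - 1) ^ s⁻¹ := by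
  set x := c ^ s
  set p := t / s
  have hxp : x ^ p = c ^ t := by rw [← rpow_mul hc, mul_div_cancel₀ t hs.ne']
  have hp : 1 ≤ p := (one_le_div hs).2 hst
  have hx : 1 / 2 ≤ x := by
    by_contra! hx
    have : x ^ p ≤ x ^ (1 : ℝ) :=
      rpow_le_rpow_of_exponent_ge' (rpow_nonneg hc s) (by linarith) zero_le_one hp
    rw [rpow_one] at this
    linarith
  calc (2 * c ^ t - 1) ^ t⁻¹ = (2 * x ^ p - 1) ^ t⁻¹ := by rw [hxp]
    _ ≤ ((2 * x - 1) ^ p) ^ t⁻¹ :=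
      rpow_le_rpow (by rwa [hxp]) (two_mul_rpow_sub_one_le_rpow hp hx)
        (inv_nonneg.2 (hs.trans_le hst).le)
    _ = (2 * x - 1) ^ s⁻¹ := by
      rw [← rpow_mul (by linarith)]
      congr 1
      simp only [p]
      field_simp [(hs.trans_le hst).ne']

theorem tendsto_nat_mul_rpow_inv_sub_one {c : ℝ} (hc : 0 < c) :
    Tendsto (fun n : ℕ => n * (c ^ (n : ℝ)⁻¹ - 1)) atTop (𝓝 (log c)) := by
  have hderiv : HasDerivAt (fun x : ℝ => c ^ x) (log c) 0 := by
    simpa using (hasStrictDerivAt_const_rpow hc 0).hasDerivAt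
  have hslope := (hasDerivAt_iff_tendsto_slope_zero.1 hderiv).comp
    ((tendsto_inv_atTop_nhdsGT_zero.mono_right (nhdsWithin_mono _ fun x hx => ne_of_gt hx)).comp
      tendsto_natCast_atTop_atTop)
  refine hslope.congr fun n => ?_
  simp [Function.comp]

/-- For `q ∈ [0,1)`, the function
`m ↦ 1 − (2(1−q)^{1/m} − 1)^m` (for positive integers `m` where the base is
nonnegative) is non-increasing in `m`, equals its maximum value `2q` at `m = 1`,
and converges to `2q − q²` as `m → ∞`. -/
theorem min_bound_monotone_limit
    (q : ℝ) (hq : q ∈ Set.Ico (0 : ℝ) 1)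
    (f : ℕ → ℝ)
    (hf : f = fun m : ℕ => 1 - (2 * (1 - q) ^ ((m : ℝ)⁻¹) - 1) ^ m) :
    (∀ m n : ℕ, 1 ≤ m → m ≤ n →
        0 ≤ 2 * (1 - q) ^ ((m : ℝ)⁻¹) - 1 → f n ≤ f m)
      ∧ f 1 = 2 * q
      ∧ Tendsto f atTop (nhds (2 * q - q ^ 2)) := by
  have hc : 0 < 1 - q := sub_pos.2 hq.2
  subst hf
  refine ⟨fun m n hm hmn hb => ?_, by norm_num; ring, ?_⟩
  · have hm₀ : (0 : ℝ) < m := by exact_mod_cast hm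
    have hmn' : (m : ℝ) ≤ n := by exact_mod_cast hmn
    have h := two_mul_rpow_sub_one_rpow_inv_le hc.le (inv_pos.2 (hm₀.trans_le hmn'))
      (inv_anti₀ hm₀ hmn') hb
    simp only [inv_inv, rpow_natCast] at h
    linarith
  · have hg : Tendsto (fun n : ℕ => n * (2 * ((1 - q) ^ (n : ℝ)⁻¹ - 1))) atTop
        (𝓝 (2 * log (1 - q))) := by
      simpa only [mul_left_comm] using (tendsto_nat_mul_rpow_inv_sub_one hc).const_mul 2
    have hpow := (tendsto_one_add_pow_exp_of_tendsto hg).const_sub 1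
    have hexp : exp (2 * log (1 - q)) = (1 - q) ^ 2 := by
      rw [← rpow_two, rpow_def_of_pos hc, mul_comm]
    rw [hexp] at hpow
    convert hpow using 2 with n <;> ring
end
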